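/- Let X be a finite nonempty set, θ : X → ℝ, and Z = Σ_{x∈X} exp(θ(x)). Let {γ(x)}_{x∈X} be independent real random variables, each distributed according to the zero-mean Gumbel distribution. Then E_γ[ max_{x∈X} (θ(x) + γ(x)) ] = log Z. -/

import Mathlib

/-! If `E` is a standard exponential variable, then `-log E - c` has the zero-mean Gumbel law:
its mean is `-∫₀^∞ log u e^{-u} du - c = -Γ'(1) - c = 0`. The cdf of `max_x (θ x + γ x)` is
the product of the shifted cdfs `F (t - θ x)`, and this product collapses to `F (t - log Z)`.
So the maximum minus `log Z` is again zero-mean Gumbel, whence its mean is `log Z`. -/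

open MeasureTheory Real ProbabilityTheory Set

noncomputable section

def stdExponential : Measure ℝ :=
  (volume.restrict (Ioi 0)).withDensity fun u => ENNReal.ofReal (exp (-u))

def gumbelMeasure : Measure ℝ :=
  stdExponential.map fun u => -log u - eulerMascheroniConstant

def gumbelCDF (t : ℝ) : ℝ :=
  exp (-exp (-(t + eulerMascheroniConstant)))

end

lemma integral_log_mul_exp_neg :
    ∫ t in Ioi (0 : ℝ), log t * exp (-t) = -eulerMascheroniConstant := by
  have hGamma : HasDerivAt Complex.GammaIntegral (-eulerMascheroniConstant : ℂ) 1 := by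
    refine Complex.hasDerivAt_Gamma_one.congr_of_eventuallyEq ?_
    filter_upwards [Complex.continuous_re.isOpen_preimage _ isOpen_Ioi |>.mem_nhds
      (by simp : (1 : ℂ) ∈ Complex.re ⁻¹' Ioi 0)] with s hs
    exact (Complex.Gamma_eq_integral hs).symm
  have h := (Complex.hasDerivAt_GammaIntegral (s := 1) (by simp)).unique hGamma
  simp only [sub_self, Complex.cpow_zero, one_mul] at h
  exact_mod_cast integral_ofReal.trans (by exact_mod_cast h)

lemma integrableOn_log_mul_exp_neg : IntegrableOn (fun t => log t * exp (-t)) (Ioi 0) :=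
  .of_integral_ne_zero <| by
    rw [integral_log_mul_exp_neg, neg_ne_zero]
    linarith [one_half_lt_eulerMascheroniConstant]

lemma stdExponential_apply {s : Set ℝ} (hs : MeasurableSet s) :
    stdExponential s = ∫⁻ u in s ∩ Ioi 0, ENNReal.ofReal (exp (-u)) := by
  rw [stdExponential, withDensity_apply _ hs, Measure.restrict_restrict hs]

lemma stdExponential_Ici {a : ℝ} (ha : 0 < a) :
    stdExponential (Ici a) = ENNReal.ofReal (exp (-a)) := by
  have hint : IntegrableOn (fun u => exp (-u)) (Ici a) :=
    (integrableOn_exp_neg_Ioi a).congr_set_ae Ioi_ae_eq_Ici.symm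
  rw [stdExponential_apply measurableSet_Ici, inter_eq_left.2 (Ici_subset_Ioi.2 ha),
    ← ofReal_integral_eq_lintegral_ofReal hint (ae_of_all _ fun u => (exp_pos _).le),
    integral_Ici_eq_integral_Ioi, integral_exp_neg_Ioi]

instance : IsProbabilityMeasure stdExponential where
  measure_univ := by
    rw [stdExponential_apply MeasurableSet.univ, univ_inter,
      ← ofReal_integral_eq_lintegral_ofReal (integrableOn_exp_neg_Ioi 0)
        (ae_of_all _ fun u => (exp_pos _).le),
      integral_exp_neg_Ioi_zero, ENNReal.ofReal_one]

lemma integrable_stdExponential_iff {f : ℝ → ℝ} :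
    Integrable f stdExponential ↔ IntegrableOn (fun u => exp (-u) * f u) (Ioi 0) := by
  rw [stdExponential,
    integrable_withDensity_iff (by fun_prop) (ae_of_all _ fun _ => ENNReal.ofReal_lt_top)]
  refine integrable_congr (ae_of_all _ fun u => ?_)
  simp [ENNReal.toReal_ofReal (exp_pos _).le, mul_comm]

lemma integral_stdExponential (f : ℝ → ℝ) :
    ∫ u, f u ∂stdExponential = ∫ u in Ioi 0, exp (-u) * f u := by
  rw [stdExponential, integral_withDensity_eq_integral_toReal_smul (by fun_prop)
    (ae_of_all _ fun _ => ENNReal.ofReal_lt_top)]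
  simp [ENNReal.toReal_ofReal (exp_pos _).le]

lemma integrable_log_stdExponential : Integrable log stdExponential :=
  integrable_stdExponential_iff.2 (by simpa only [mul_comm] using integrableOn_log_mul_exp_neg)

lemma integral_log_stdExponential : ∫ u, log u ∂stdExponential = -eulerMascheroniConstant := by
  rw [integral_stdExponential]
  simpa only [mul_comm] using integral_log_mul_exp_neg

lemma gumbelCDF_nonneg (t : ℝ) : 0 ≤ gumbelCDF t :=
  (exp_pos _).le

lemma prod_gumbelCDF_sub {X : Type*} [Fintype X] [Nonempty X] (θ : X → ℝ) (t : ℝ) :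
    ∏ x, gumbelCDF (t - θ x) = gumbelCDF (t - log (∑ x, exp (θ x))) := by
  have hZ : 0 < ∑ x, exp (θ x) := Finset.sum_pos (fun x _ => exp_pos _) Finset.univ_nonempty
  have hshift (a : ℝ) : exp (-(t - a + eulerMascheroniConstant))
      = exp a * exp (-(t + eulerMascheroniConstant)) := by
    rw [← exp_add]; ring_nf
  simp only [gumbelCDF, ← exp_sum, hshift, exp_log hZ, Finset.sum_neg_distrib, Finset.sum_mul]

lemma gumbelMeasure_Iic (t : ℝ) : gumbelMeasure (Iic t) = ENNReal.ofReal (gumbelCDF t) := by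
  have hmeas : Measurable fun u => -log u - eulerMascheroniConstant := by fun_prop
  have hpre : (fun u => -log u - eulerMascheroniConstant) ⁻¹' Iic t ∩ Ioi 0
      = Ici (exp (-(t + eulerMascheroniConstant))) ∩ Ioi 0 := by
    ext u
    simp only [mem_inter_iff, mem_preimage, mem_Iic, mem_Ici, mem_Ioi, and_congr_left_iff]
    intro hu
    rw [← le_log_iff_exp_le hu]
    constructor <;> intro h <;> linarith
  rw [gumbelMeasure, Measure.map_apply hmeas measurableSet_Iic,
    stdExponential_apply (hmeas measurableSet_Iic), hpre,
    ← stdExponential_apply measurableSet_Ici, stdExponential_Ici (exp_pos _), gumbelCDF]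

lemma integrable_id_gumbelMeasure : Integrable id gumbelMeasure := by
  rw [gumbelMeasure, integrable_map_measure aestronglyMeasurable_id (by fun_prop)]
  exact integrable_log_stdExponential.neg.sub (integrable_const _)

lemma integral_id_gumbelMeasure : ∫ t, t ∂gumbelMeasure = 0 := by
  rw [gumbelMeasure, integral_map (f := fun t => t) (by fun_prop) (by fun_prop),
    integral_sub (f := fun u => -log u) integrable_log_stdExponential.neg (integrable_const _),
    integral_neg, integral_log_stdExponential, integral_const]
  simp

section RandomVariables

variable {Ω : Type*} [MeasurableSpace Ω] {P : Measure Ω}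

lemma map_eq_gumbelMeasure [IsFiniteMeasure P] {Y : Ω → ℝ} (hY : Measurable Y)
    (hcdf : ∀ t, P {ω | Y ω ≤ t} = ENNReal.ofReal (gumbelCDF t)) :
    P.map Y = gumbelMeasure :=
  Measure.ext_of_Iic _ _ fun t => by
    rw [Measure.map_apply hY measurableSet_Iic, gumbelMeasure_Iic, ← hcdf]
    rfl

lemma integrable_of_map_eq_gumbelMeasure {Y : Ω → ℝ} (hY : AEMeasurable Y P)
    (h : P.map Y = gumbelMeasure) : Integrable Y P := by
  refine (integrable_map_measure aestronglyMeasurable_id hY).1 ?_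
  rw [h]
  exact integrable_id_gumbelMeasure

lemma integral_eq_zero_of_map_eq_gumbelMeasure {Y : Ω → ℝ} (hY : AEMeasurable Y P)
    (h : P.map Y = gumbelMeasure) : ∫ ω, Y ω ∂P = 0 := by
  rw [← integral_map (f := fun t => t) hY (by fun_prop), h, integral_id_gumbelMeasure]

lemma ProbabilityTheory.iIndepFun.measure_iSup_le {X : Type*} [Fintype X] [Nonempty X]
    {Y : X → Ω → ℝ} (hY : iIndepFun Y P) (t : ℝ) :
    P {ω | ⨆ x, Y x ω ≤ t} = ∏ x, P {ω | Y x ω ≤ t} := by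
  have hset : {ω | ⨆ x, Y x ω ≤ t} = ⋂ x, Y x ⁻¹' Iic t := by
    ext ω
    simp [ciSup_le_iff (Finite.bddAbove_range _)]
  rw [hset, hY.meas_iInter fun x => ⟨Iic t, measurableSet_Iic, rfl⟩]
  rfl

end RandomVariables

/-- Let `X` be a finite nonempty set, `θ : X → ℝ`, and
`Z = ∑ x, exp (θ x)`.  If `γ x`, `x : X`, are independent random variables, each with the
zero-mean Gumbel distribution (cdf `t ↦ exp (-exp (-(t + c)))`, `c` the Euler–Mascheroni
constant), then `E [max_x (θ x + γ x)] = log Z`. -/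
theorem expected_perturbed_max_eq_log_partition
    {X : Type*} [Fintype X] [Nonempty X] (θ : X → ℝ)
    {Ω : Type*} [MeasurableSpace Ω] (P : Measure Ω) [IsProbabilityMeasure P]
    (γ : X → Ω → ℝ) (hmeas : ∀ x, Measurable (γ x))
    (hindep : iIndepFun γ P)
    (hcdf : ∀ x t, P {ω | γ x ω ≤ t} =
      ENNReal.ofReal (exp (-exp (-(t + eulerMascheroniConstant))))) :
    Integrable (fun ω => ⨆ x : X, (θ x + γ x ω)) P ∧
      ∫ ω, (⨆ x : X, (θ x + γ x ω)) ∂P = Real.log (∑ x : X, exp (θ x)) := by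
  set L := log (∑ x, exp (θ x))
  set M := fun ω => ⨆ x, (θ x + γ x ω)
  have hM : Measurable M := Measurable.iSup fun x => measurable_const.add (hmeas x)
  have hperturbed : iIndepFun (fun x ω => θ x + γ x ω) P :=
    hindep.comp (fun x s => θ x + s) fun x => measurable_const_add _
  have hlaw : P.map (fun ω => M ω - L) = gumbelMeasure := by
    refine map_eq_gumbelMeasure (hM.sub_const L) fun t => ?_
    calc P {ω | M ω - L ≤ t} = ∏ x, P {ω | θ x + γ x ω ≤ t + L} := by
          simp only [sub_le_iff_le_add, M, hperturbed.measure_iSup_le]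
      _ = ∏ x, ENNReal.ofReal (gumbelCDF (t + L - θ x)) := by
          simp only [← le_sub_iff_add_le', hcdf, gumbelCDF]
      _ = ENNReal.ofReal (gumbelCDF t) := by
          rw [← ENNReal.ofReal_prod_of_nonneg fun x _ => gumbelCDF_nonneg _, prod_gumbelCDF_sub,
            add_sub_cancel_right]
  have hint := integrable_of_map_eq_gumbelMeasure (hM.sub_const L).aemeasurable hlaw
  have hM_eq : M = fun ω => (M ω - L) + L := by simp
  refine ⟨hM_eq ▸ hint.add (integrable_const L), ?_⟩
  rw [hM_eq, integral_add hint (integrable_const L),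
    integral_eq_zero_of_map_eq_gumbelMeasure (hM.sub_const L).aemeasurable hlaw]
  simp
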